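/- arXiv:2307.09962 — 3 statements merged into one kernel-verified Lean document; each statement's English description precedes it below -/
import Mathlib

section
/- For x ∈ V, the set C̄(x) := { u ∈ V | u + x ≤_V x } is a summand absorbing submonoid of V: it contains 0, is closed under addition, and if u + v ∈ C̄(x) then u ∈ C̄(x) and v ∈ C̄(x). -/
theorem Cbar_SA_submonoid {V : Type*} [AddCommMonoid V] (x : V) :
    let C : Set V := { u | ∃ d, (u + x) + d = x }
    ((0 : V) ∈ C) ∧
    (∀ u v : V, u ∈ C → v ∈ C → u + v ∈ C) ∧
    (∀ u v : V, u + v ∈ C → u ∈ C ∧ v ∈ C) := by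
  intro C
  refine ⟨⟨0, by simp⟩, ?_, ?_⟩
  · rintro u v ⟨d, hd⟩ ⟨e, he⟩
    refine ⟨d + e, ?_⟩
    calc (u + v + x) + (d + e) = (v + (u + x + d)) + e := by abel
      _ = (v + x) + e := by rw [hd]
      _ = x := he
  · rintro u v ⟨d, hd⟩
    constructor
    · exact ⟨v + d, by calc (u + x) + (v + d) = u + v + x + d := by abel
        _ = x := hd⟩
    · exact ⟨u + d, by calc (v + x) + (u + d) = u + v + x + d := by abel
        _ = x := hd⟩
end

section
/- For x ∈ V, the set W(x) := { y ∈ V | ∃ n ≥ 1 : y ≤_V n·x } is the minimal summand absorbing submonoid of V containing the archimedean class [x]_{aV}: it is an SA-submonoid containing [x]_{aV}, and any SA-submonoid W' with [x]_{aV} ⊆ W' satisfies W(x) ⊆ W'. -/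
theorem Wx_minimal_SA {V : Type*} [AddCommMonoid V] (x : V) :
    let A : Set V := { y | (∃ n : ℕ, 1 ≤ n ∧ ∃ d, x + d = n • y) ∧
                           (∃ m : ℕ, 1 ≤ m ∧ ∃ d, y + d = m • x) }
    let Wx : Set V := { y | ∃ n : ℕ, 1 ≤ n ∧ ∃ d, y + d = n • x }
    ((0 : V) ∈ Wx) ∧ (∀ u v : V, u ∈ Wx → v ∈ Wx → u + v ∈ Wx) ∧
    (∀ u v : V, u + v ∈ Wx → u ∈ Wx ∧ v ∈ Wx) ∧ (A ⊆ Wx) ∧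
    (∀ W' : Set V, (0 : V) ∈ W' → (∀ u v : V, u ∈ W' → v ∈ W' → u + v ∈ W') →
      (∀ u v : V, u + v ∈ W' → u ∈ W' ∧ v ∈ W') → A ⊆ W' → Wx ⊆ W') := by
  intro A Wx
  refine ⟨⟨1, le_refl 1, x, by simp⟩, ?_, ?_, ?_, ?_⟩
  · rintro u v ⟨n, hn, d, hd⟩ ⟨m, hm, e, he⟩
    exact ⟨n + m, le_trans hn (Nat.le_add_right n m), d + e, by
      rw [add_smul, ← hd, ← he]; abel⟩
  · rintro u v ⟨n, hn, d, hd⟩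
    constructor
    · exact ⟨n, hn, v + d, by rw [← hd]; abel⟩
    · exact ⟨n, hn, u + d, by rw [← hd]; abel⟩
  · rintro y ⟨_, m, hm, d, hd⟩
    exact ⟨m, hm, d, hd⟩
  · intro W' h0 hadd hSA hA
    have hx : x ∈ W' := hA ⟨⟨1, le_refl 1, 0, by simp⟩, ⟨1, le_refl 1, 0, by simp⟩⟩
    have hnx : ∀ n : ℕ, n • x ∈ W' := by
      intro n
      induction n with
      | zero => simpa using h0
      | succ k ih => rw [succ_nsmul]; exact hadd _ _ ih hx
    rintro y ⟨n, hn, d, hd⟩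
    exact (hSA y d (hd ▸ hnx n)).1
end

section
/- For archimedean classes A = [x]_{aV} and B = [y]_{aV} in an additive commutative monoid V, the following are equivalent: (i) [x + y]_{aV} = [x]_{aV} (i.e., B + A = A in Γ(V)); (ii) there exists n ≥ 1 with y + x ≤_V n·x; (iii) W(y) ⊆ W(x), where W(z) := { v | ∃ n ≥ 1 : v ≤_V n·z }. -/
theorem class_add_eq_iff_W_subset {V : Type*} [AddCommMonoid V] (x y : V) :
    let leV : V → V → Prop := fun a b => ∃ d, a + d = b
    let cls : V → Set V := fun z =>
      { v | (∃ n : ℕ, 1 ≤ n ∧ leV z (n • v)) ∧ (∃ m : ℕ, 1 ≤ m ∧ leV v (m • z)) }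
    let Wof : V → Set V := fun z => { v | ∃ n : ℕ, 1 ≤ n ∧ leV v (n • z) }
    ((cls (x + y) = cls x) ↔ (∃ n : ℕ, 1 ≤ n ∧ leV (y + x) (n • x))) ∧
    ((∃ n : ℕ, 1 ≤ n ∧ leV (y + x) (n • x)) ↔ Wof y ⊆ Wof x) := by
  intro leV cls Wof
  have trans : ∀ {a b c : V}, leV a b → leV b c → leV a c := by
    rintro a b c ⟨d, rfl⟩ ⟨e, rfl⟩
    exact ⟨d + e, (add_assoc _ _ _).symm⟩
  have smul_mono : ∀ (m : ℕ) {a b : V}, leV a b → leV (m • a) (m • b) := by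
    rintro m a b ⟨d, rfl⟩
    exact ⟨m • d, (smul_add m a d).symm⟩
  have hx_xy : leV x (x + y) := ⟨y, rfl⟩
  constructor
  · constructor
    · intro h
      have hxy : (x + y) ∈ cls (x + y) := ⟨⟨1, le_refl 1, ⟨0, by simp⟩⟩, ⟨1, le_refl 1, ⟨0, by simp⟩⟩⟩
      rw [h] at hxy
      obtain ⟨m, hm, hle⟩ := hxy.2
      exact ⟨m, hm, by rwa [add_comm y x]⟩
    · rintro ⟨n, hn, hle⟩
      have hle' : leV (x + y) (n • x) := by rwa [add_comm y x] at hle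
      ext v
      constructor
      · rintro ⟨⟨n₁, hn₁, h1⟩, ⟨m₁, hm₁, h2⟩⟩
        refine ⟨⟨n₁, hn₁, trans hx_xy h1⟩, ⟨m₁ * n, Nat.one_le_iff_ne_zero.2 (by positivity), ?_⟩⟩
        have := trans h2 (smul_mono m₁ hle')
        rwa [smul_smul] at this
      · rintro ⟨⟨n₁, hn₁, h1⟩, ⟨m₁, hm₁, h2⟩⟩
        refine ⟨⟨n * n₁, Nat.one_le_iff_ne_zero.2 (by positivity), ?_⟩, ⟨m₁, hm₁, trans h2 (smul_mono m₁ hx_xy)⟩⟩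
        have := trans hle' (smul_mono n h1)
        rwa [smul_smul] at this
  · constructor
    · rintro ⟨n, hn, hle⟩
      intro v hv
      obtain ⟨m, hm, h2⟩ := hv
      have hy : leV y (n • x) := trans ⟨x, rfl⟩ hle
      refine ⟨m * n, Nat.one_le_iff_ne_zero.2 (by positivity), ?_⟩
      have := trans h2 (smul_mono m hy)
      rwa [smul_smul] at this
    · intro h
      have hy : y ∈ Wof y := ⟨1, le_refl 1, ⟨0, by simp⟩⟩
      obtain ⟨n, hn, d, hd⟩ := h hy
      refine ⟨n + 1, by omega, ⟨d, ?_⟩⟩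
      rw [add_right_comm, hd, add_smul, one_smul]
end
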